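/- Let k > ℓ ≥ 2, let α be the dominant root of Ψ_k and β the dominant root of Ψ_ℓ. If integers n, m with m ≥ 7 satisfy (2α−1)f_k(α)α^(n−1) = (2β−1)f_ℓ(β)β^(m−1) (i.e. the associated linear form Λ vanishes), then a contradiction follows; in particular, Λ = α^(n−1)·β^{−(m−1)}·(2α−1)f_k(α)((2β−1)f_ℓ(β))^{−1} − 1 is nonzero. -/

import Mathlib

/-!
Write `A_s(x) = (2x - 1) f_s(x)`. If `Λ = 0` then `α^(n-1) A_k(α) = β^(m-1) A_ℓ(β)`, and the
right-hand side exceeds `6` because `β > 8/5`, `A_ℓ(β) > 1/2` and `m ≥ 7`. For `n ≤ 1` the left-hand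
side is at most `A_k(α) < 3`. For `n ≥ 2` we use that the dominant root is the only root of `Ψ_s`
outside the open unit disc, while `|A_s| ≤ 6` on the closed disc. If `α ∉ ℚ(β)`, an embedding of
`ℚ(β)(α)` fixing `ℚ(β)` sends `α` to another root of `Ψ_k` and makes the left-hand side at most `6`
while the right-hand side is unchanged; symmetrically `β ∈ ℚ(α)`. So `ℚ(α) = ℚ(β)`, which is
impossible as `Ψ_k`, `Ψ_ℓ` are irreducible of degrees `k ≠ ℓ`: a monic integer factor of `Ψ_s`
not vanishing at the (simple) dominant root has all its roots in the open unit disc, yet a constant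
term of absolute value `1`.
-/

open Finset Polynomial IntermediateField

/-- The coefficient `(2x - 1) f_s(x)` of the dominant term in the Binet-type formula for the
`s`-generalized Lucas numbers. -/
def lucasCoeff (s : ℕ) {F : Type*} [Field F] (x : F) : F :=
  (2 * x - 1) * ((x - 1) / (2 + ((s : F) + 1) * (x - 2)))

lemma map_lucasCoeff {F K G : Type*} [Field F] [Field K] [FunLike G F K] [RingHomClass G F K]
    (φ : G) (s : ℕ) (x : F) :
    φ (lucasCoeff s x) = lucasCoeff s (φ x) := by
  simp [lucasCoeff, map_ofNat]

@[simp, norm_cast]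
lemma Complex.ofReal_lucasCoeff (s : ℕ) (x : ℝ) :
    ((lucasCoeff s x : ℝ) : ℂ) = lucasCoeff s (x : ℂ) :=
  map_lucasCoeff Complex.ofRealHom s x

lemma norm_lucasCoeff_le_six {s : ℕ} (hs : 2 ≤ s) {z : ℂ} (hz : ‖z‖ ≤ 1) :
    ‖lucasCoeff s z‖ ≤ 6 := by
  have hsR : (2 : ℝ) ≤ s := by exact_mod_cast hs
  have hnum : ‖2 * z - 1‖ ≤ 3 := by
    calc ‖2 * z - 1‖ ≤ ‖2 * z‖ + ‖(1 : ℂ)‖ := norm_sub_le _ _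
      _ ≤ 3 := by rw [norm_mul, Complex.norm_ofNat, norm_one]; linarith
  have hnum' : ‖z - 1‖ ≤ 2 := by
    calc ‖z - 1‖ ≤ ‖z‖ + ‖(1 : ℂ)‖ := norm_sub_le _ _
      _ ≤ 2 := by rw [norm_one]; linarith
  -- the denominator is `(s + 1) z - 2 s`, which stays away from `0` on the unit disc
  have hden : 1 ≤ ‖2 + ((s : ℂ) + 1) * (z - 2)‖ := by
    have hrw : 2 + ((s : ℂ) + 1) * (z - 2) = -(2 * (s : ℂ) - ((s : ℂ) + 1) * z) := by ring
    have h := norm_sub_norm_le (2 * (s : ℂ)) (((s : ℂ) + 1) * z)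
    have hs1 : ‖((s : ℂ) + 1) * z‖ ≤ s + 1 := by
      rw [norm_mul, show (s : ℂ) + 1 = ((s + 1 : ℕ) : ℂ) by push_cast; ring, Complex.norm_natCast]
      push_cast
      nlinarith [norm_nonneg z]
    rw [hrw, norm_neg]
    rw [norm_mul, Complex.norm_ofNat, Complex.norm_natCast] at h
    linarith
  rw [lucasCoeff, norm_mul, norm_div]
  calc ‖2 * z - 1‖ * (‖z - 1‖ / ‖2 + ((s : ℂ) + 1) * (z - 2)‖) ≤ 3 * (2 / 1) := by
        gcongr
    _ = 6 := by norm_num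

lemma norm_zpow_mul_lucasCoeff_le_six {s : ℕ} (hs : 2 ≤ s) {z : ℂ} (hz : ‖z‖ ≤ 1) {a : ℤ}
    (ha : 0 ≤ a) : ‖z ^ a * lucasCoeff s z‖ ≤ 6 := by
  lift a to ℕ using ha
  rw [zpow_natCast, norm_mul, norm_pow]
  calc ‖z‖ ^ a * ‖lucasCoeff s z‖ ≤ 1 * 6 := by
        gcongr
        exacts [pow_le_one₀ (norm_nonneg z) hz, norm_lucasCoeff_le_six hs hz]
    _ = 6 := one_mul 6

lemma pow_mul_two_sub_eq_one {R : Type*} [CommRing R] {s : ℕ} {z : R}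
    (hz : z ^ s = ∑ i ∈ range s, z ^ i) : z ^ s * (2 - z) = 1 := by
  linear_combination (-1 : R) * geom_sum_mul z s - (z - 1) * hz

lemma pow_lt_geom_sum_of_lt {s : ℕ} (hs : 1 ≤ s) {t x : ℝ} (ht : 0 < t) (htx : t < x)
    (hx : x ^ s = ∑ i ∈ range s, x ^ i) : t ^ s < ∑ i ∈ range s, t ^ i := by
  have hterm : ∀ i ∈ range s, x ^ i * t ^ s < t ^ i * x ^ s := by
    intro i hi
    have hi : i + (s - i) = s := by have := mem_range.1 hi; omega
    have hlt : t ^ (s - i) < x ^ (s - i) :=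
      pow_lt_pow_left₀ htx ht.le (by have := mem_range.1 ‹i ∈ range s›; omega)
    rw [← hi, pow_add, pow_add]
    have : 0 < x ^ i * t ^ i := mul_pos (pow_pos (ht.trans htx) i) (pow_pos ht i)
    nlinarith
  have hsum := sum_lt_sum_of_nonempty (nonempty_range_iff.2 (by omega)) hterm
  rw [← sum_mul, ← sum_mul, ← hx] at hsum
  have : 0 < x ^ s := pow_pos (ht.trans htx) s
  nlinarith

lemma eq_one_of_norm_eq_one_of_norm_two_sub_eq_one {z : ℂ} (hz : ‖z‖ = 1) (h2z : ‖2 - z‖ = 1) :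
    z = 1 := by
  have h1 : z.re * z.re + z.im * z.im = 1 := by
    rw [← Complex.normSq_apply, ← Complex.sq_norm, hz, one_pow]
  have h2 : (2 - z.re) * (2 - z.re) + z.im * z.im = 1 := by
    have := Complex.sq_norm (2 - z)
    rw [h2z, Complex.normSq_apply] at this
    simpa using this.symm
  have hre : z.re = 1 := by nlinarith
  have him : z.im = 0 := by nlinarith
  exact Complex.ext (by simp [hre]) (by simp [him])

noncomputable def psi (s : ℕ) : ℤ[X] := X ^ s - ∑ i ∈ range s, X ^ i

lemma degree_geom_sum_X_lt (s : ℕ) : (∑ i ∈ range s, (X : ℤ[X]) ^ i).degree < s :=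
  (degree_sum_le _ _).trans_lt <| (Finset.sup_lt_iff (WithBot.bot_lt_coe s)).2 fun i hi =>
    (degree_X_pow_le i).trans_lt (WithBot.coe_lt_coe.2 (mem_range.1 hi))

lemma psi_monic (s : ℕ) : (psi s).Monic := monic_X_pow_sub (degree_geom_sum_X_lt s)

lemma natDegree_psi (s : ℕ) : (psi s).natDegree = s := by
  refine natDegree_eq_of_degree_eq_some ?_
  rw [psi, degree_sub_eq_left_of_degree_lt] <;> rw [degree_X_pow]
  exact degree_geom_sum_X_lt s

lemma coeff_zero_psi {s : ℕ} (hs : 1 ≤ s) : (psi s).coeff 0 = -1 := by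
  simp [psi, coeff_X_pow, (by omega : 0 < s), (by omega : s ≠ 0).symm]

lemma aeval_psi_eq_zero_iff {R : Type*} [CommRing R] {s : ℕ} {z : R} :
    aeval z (psi s) = 0 ↔ z ^ s = ∑ i ∈ range s, z ^ i := by
  simp [psi, sub_eq_zero]

lemma X_sub_one_mul_psi (s : ℕ) : (X - 1) * psi s = X ^ (s + 1) - 2 * X ^ s + 1 := by
  rw [psi]; linear_combination (-1 : ℤ[X]) * geom_sum_mul (X : ℤ[X]) s

/-- The constant term of a monic integer polynomial is `± ∏ roots`, and a nonzero integer has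
absolute value at least `1`. -/
lemma natDegree_eq_zero_of_forall_norm_aroots_lt_one {q : ℤ[X]} (hq : q.Monic)
    (h0 : q.coeff 0 ≠ 0) (hroots : ∀ z ∈ q.aroots ℂ, ‖z‖ < 1) : q.natDegree = 0 := by
  by_contra hdeg
  set qC := q.map (algebraMap ℤ ℂ)
  have hcard : Multiset.card qC.roots = q.natDegree := by
    rw [← (IsAlgClosed.splits qC).natDegree_eq_card_roots, hq.natDegree_map]
  have hprod := (IsAlgClosed.splits qC).coeff_zero_eq_prod_roots_of_monic (hq.map _)
  rw [coeff_map, eq_intCast] at hprod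
  have hlt : (qC.roots.map (‖·‖)).prod < (qC.roots.map fun _ => (1 : ℝ)).prod := by
    refine Multiset.prod_map_lt_prod_map (fun h => hdeg (by rw [← hcard, h]; rfl)) _ _
      (fun z hz => norm_pos_iff.2 ?_) hroots
    rintro rfl
    have := (coeff_zero_eq_aeval_zero' q).trans (mem_aroots.1 hz).2
    exact h0 (by simpa using this)
  have hge : (1 : ℝ) ≤ ‖((q.coeff 0 : ℤ) : ℂ)‖ := by
    rw [Complex.norm_intCast]; exact_mod_cast Int.one_le_abs h0
  rw [hprod, norm_mul, norm_pow, norm_neg, norm_one, one_pow, one_mul] at hge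
  have hnorm : ‖qC.roots.prod‖ = (qC.roots.map (‖·‖)).prod := map_multiset_prod (normHom (α := ℂ)) _
  rw [Multiset.map_const', Multiset.prod_replicate, one_pow] at hlt
  linarith

lemma isIntegral_of_aeval_psi_eq_zero {R : Type*} [CommRing R] {s : ℕ} {z : R}
    (hz : aeval z (psi s) = 0) : IsIntegral ℤ z :=
  ⟨psi s, psi_monic s, hz⟩

lemma exists_algHom_adjoin_gen_ne {F K : Type*} [Field F] [Field K] [Algebra F K] [IsAlgClosed K]
    [PerfectField F] {c : K} (hc : IsIntegral F c) (hcF : c ∉ (algebraMap F K).range) :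
    ∃ σ : F⟮c⟯ →ₐ[F] K, σ (AdjoinSimple.gen F c) ≠ c := by
  classical
  have hdeg : 1 < (minpoly F c).natDegree :=
    lt_of_le_of_ne (minpoly.natDegree_pos hc) fun h => hcF (minpoly.natDegree_eq_one_iff.1 h.symm)
  have hnodup : ((minpoly F c).aroots K).Nodup :=
    nodup_roots (PerfectField.separable_of_irreducible (minpoly.irreducible hc)).map
  have hcard : 1 < ((minpoly F c).aroots K).toFinset.card := by
    rwa [Multiset.toFinset_card_of_nodup hnodup, IsAlgClosed.card_aroots_eq_natDegree]
  obtain ⟨c', hc', hne⟩ := Finset.exists_mem_ne hcard c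
  refine ⟨(algHomAdjoinIntegralEquiv F hc).symm ⟨c', Multiset.mem_toFinset.1 hc'⟩, ?_⟩
  rwa [algHomAdjoinIntegralEquiv_symm_apply_gen]

section DominantRoot

variable {s : ℕ} {x : ℝ} (hs : 2 ≤ s) (hx1 : 1 < x) (hx : x ^ s = ∑ i ∈ range s, x ^ i)
include hs hx1 hx

lemma nat_lt_pow_of_dominant : (s : ℝ) < x ^ s := by
  rw [hx]
  calc (s : ℝ) = ∑ _i ∈ range s, (1 : ℝ) := by simp
    _ < ∑ i ∈ range s, x ^ i := sum_lt_sum (fun i _ => one_le_pow₀ hx1.le)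
        ⟨1, mem_range.2 (by omega), by simpa using hx1⟩

omit hs in
lemma lt_two_of_dominant : x < 2 := by
  have h := pow_mul_two_sub_eq_one hx
  have : 0 < x ^ s := by positivity
  nlinarith

lemma nat_mul_two_sub_lt_one : (s : ℝ) * (2 - x) < 1 := by
  have h := pow_mul_two_sub_eq_one hx
  have h2 := lt_two_of_dominant hx1 hx
  nlinarith [nat_lt_pow_of_dominant hs hx1 hx]

lemma nat_lt_pow_succ_of_dominant : (s : ℝ) < x ^ (s + 1) := by
  have h := pow_mul_two_sub_eq_one hx
  have h2 := lt_two_of_dominant hx1 hx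
  have h3 := nat_mul_two_sub_lt_one hs hx1 hx
  have : (s : ℝ) * (2 - x) < x ^ (s + 1) * (2 - x) := by rw [pow_succ]; nlinarith
  exact lt_of_mul_lt_mul_right this (by linarith)

lemma eight_fifths_lt_of_dominant : 8 / 5 < x := by
  have h := pow_mul_two_sub_eq_one hx
  have h2 := lt_two_of_dominant hx1 hx
  have hsq : x ^ 2 * (2 - x) ≤ 1 := by
    rw [← h]; gcongr
    linarith
  have hgold : 0 ≤ x ^ 2 - x - 1 := by
    by_contra hneg
    nlinarith [mul_neg_of_pos_of_neg (sub_pos.2 hx1) (not_le.1 hneg)]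
  nlinarith

lemma lucasCoeff_denom_pos : 0 < 2 + ((s : ℝ) + 1) * (x - 2) := by
  have := nat_mul_two_sub_lt_one hs hx1 hx
  nlinarith

lemma lucasCoeff_nonneg_of_dominant : 0 ≤ lucasCoeff s x :=
  mul_nonneg (by linarith) (div_nonneg (by linarith) (lucasCoeff_denom_pos hs hx1 hx).le)

lemma lucasCoeff_lt_three_of_dominant : lucasCoeff s x < 3 := by
  have hd := lucasCoeff_denom_pos hs hx1 hx
  have hf : (x - 1) / (2 + ((s : ℝ) + 1) * (x - 2)) < 1 := by
    rw [div_lt_one hd]; nlinarith [nat_mul_two_sub_lt_one hs hx1 hx]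
  have := lt_two_of_dominant hx1 hx
  have : 0 ≤ (x - 1) / (2 + ((s : ℝ) + 1) * (x - 2)) := div_nonneg (by linarith) hd.le
  unfold lucasCoeff; nlinarith

lemma half_lt_lucasCoeff_of_dominant : 1 / 2 < lucasCoeff s x := by
  have hd := lucasCoeff_denom_pos hs hx1 hx
  have h2 := lt_two_of_dominant hx1 hx
  have hsR : (2 : ℝ) ≤ s := by exact_mod_cast hs
  have hf : 1 / 2 < (x - 1) / (2 + ((s : ℝ) + 1) * (x - 2)) := by
    rw [div_lt_div_iff₀ (by norm_num) hd]; nlinarith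
  unfold lucasCoeff; nlinarith

lemma zpow_mul_lucasCoeff_lt_three {t : ℤ} (ht : t ≤ 0) : x ^ t * lucasCoeff s x < 3 :=
  (mul_le_of_le_one_left (lucasCoeff_nonneg_of_dominant hs hx1 hx)
    (zpow_le_one_of_nonpos₀ hx1.le ht)).trans_lt (lucasCoeff_lt_three_of_dominant hs hx1 hx)

lemma six_lt_zpow_mul_lucasCoeff {t : ℤ} (ht : 6 ≤ t) : 6 < x ^ t * lucasCoeff s x := by
  have h16 : 16 < x ^ t := calc
    (16 : ℝ) < (8 / 5) ^ 6 := by norm_num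
    _ ≤ x ^ 6 := by gcongr; exact (eight_fifths_lt_of_dominant hs hx1 hx).le
    _ = x ^ (6 : ℤ) := (zpow_natCast x 6).symm
    _ ≤ x ^ t := zpow_le_zpow_right₀ hx1.le ht
  nlinarith [half_lt_lucasCoeff_of_dominant hs hx1 hx]

omit hx1 in
lemma le_norm_of_root {z : ℂ} (hz : z ^ s = ∑ i ∈ range s, z ^ i) (hz1 : 1 < ‖z‖) :
    x ≤ ‖z‖ := by
  set r := ‖z‖
  have hnorm : r ^ s * ‖2 - z‖ = 1 := by
    rw [← norm_pow, ← norm_mul, pow_mul_two_sub_eq_one hz, norm_one]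
  have h2 : 2 - r ≤ ‖2 - z‖ := by
    have := norm_sub_norm_le (2 : ℂ) z
    simp only [Complex.norm_ofNat] at this
    linarith
  have hq : r ^ s * (2 - r) ≤ 1 := hnorm ▸ mul_le_mul_of_nonneg_left h2 (by positivity)
  by_contra hrx
  have hlt := pow_lt_geom_sum_of_lt (by omega) (by linarith) (not_le.1 hrx) hx
  have hgeom := geom_sum_mul r s
  nlinarith

lemma norm_lt_one_of_root {z : ℂ} (hz : z ^ s = ∑ i ∈ range s, z ^ i) (hzx : z ≠ x) :
    ‖z‖ < 1 := by
  by_contra hr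
  rcases (not_lt.1 hr).eq_or_lt with h1 | h1
  · have h2z : ‖2 - z‖ = 1 := by
      have := congrArg norm (pow_mul_two_sub_eq_one hz)
      rwa [norm_mul, norm_pow, ← h1, one_pow, one_mul, norm_one] at this
    have := eq_one_of_norm_eq_one_of_norm_two_sub_eq_one h1.symm h2z
    subst this
    have : ((1 : ℕ) : ℂ) = s := by simpa using hz
    have : 1 = s := by exact_mod_cast this
    omega
  set r := ‖z‖
  have hxr := le_norm_of_root hs hx hz h1
  have hx0 : 0 < x := by linarith
  have hkey : (x : ℂ) ^ s * z ^ s = ∑ i ∈ range s, z ^ i * (x : ℂ) ^ (s - 1 - i) := by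
    have hxC : (x : ℂ) ^ s * (2 - x) = 1 := by exact_mod_cast pow_mul_two_sub_eq_one hx
    refine mul_right_cancel₀ (sub_ne_zero.2 hzx) ?_
    rw [geom_sum₂_mul]
    linear_combination z ^ s * hxC - (x : ℂ) ^ s * pow_mul_two_sub_eq_one hz
  have hbound : x ^ s * r ^ s ≤ s * r ^ (s - 1) := by
    calc x ^ s * r ^ s = ‖∑ i ∈ range s, z ^ i * (x : ℂ) ^ (s - 1 - i)‖ := by
          rw [← hkey, norm_mul, norm_pow, norm_pow, Complex.norm_of_nonneg hx0.le]
      _ ≤ ∑ i ∈ range s, r ^ i * x ^ (s - 1 - i) := by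
          refine (norm_sum_le _ _).trans (le_of_eq (sum_congr rfl fun i _ => ?_))
          rw [norm_mul, norm_pow, norm_pow, Complex.norm_of_nonneg hx0.le]
      _ ≤ ∑ _i ∈ range s, r ^ (s - 1) := by
          refine sum_le_sum fun i hi => ?_
          calc r ^ i * x ^ (s - 1 - i) ≤ r ^ i * r ^ (s - 1 - i) := by gcongr
            _ = r ^ (s - 1) := by rw [← pow_add]; congr 1; have := mem_range.1 hi; omega
      _ = s * r ^ (s - 1) := by simp
  have hr_pow : r ^ s = r ^ (s - 1) * r := by rw [← pow_succ]; congr 1; omega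
  have hxs : x ^ s * r ≤ s := by
    rw [hr_pow] at hbound
    have : 0 < r ^ (s - 1) := by positivity
    nlinarith
  have := nat_lt_pow_succ_of_dominant hs hx1 hx
  rw [pow_succ] at this
  nlinarith [pow_pos hx0 s]

lemma aeval_derivative_psi_ne_zero : aeval x (derivative (psi s)) ≠ 0 := by
  have hd := congrArg (fun p => aeval x (derivative p)) (X_sub_one_mul_psi s)
  simp [derivative_mul, derivative_X_pow, map_ofNat, aeval_psi_eq_zero_iff.2 hx] at hd
  intro h0
  have hpow : x ^ s = x ^ (s - 1) * x := by rw [← pow_succ, Nat.sub_add_cancel (by omega)]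
  rw [h0, mul_zero, hpow] at hd
  have := nat_mul_two_sub_lt_one hs hx1 hx
  have : 0 < x ^ (s - 1) := by positivity
  nlinarith

lemma minpoly_eq_psi : minpoly ℤ x = psi s := by
  have hroot : aeval x (psi s) = 0 := aeval_psi_eq_zero_iff.2 hx
  have hint := isIntegral_of_aeval_psi_eq_zero hroot
  obtain ⟨q, hpq⟩ := minpoly.isIntegrallyClosed_dvd hint hroot
  have hq : q.Monic := (minpoly.monic hint).of_mul_monic_left (hpq ▸ psi_monic s)
  have hq0 : q.coeff 0 ≠ 0 := by
    intro h
    have := congrArg (coeff · 0) hpq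
    simp [mul_coeff_zero, h, coeff_zero_psi (by omega : 1 ≤ s)] at this
  have hqx : aeval x q ≠ 0 := by
    intro hqx
    apply aeval_derivative_psi_ne_zero hs hx1 hx
    rw [hpq, derivative_mul]
    simp [minpoly.aeval, hqx]
  have hroots : ∀ z ∈ q.aroots ℂ, ‖z‖ < 1 := by
    intro z hz
    have hqz := (mem_aroots.1 hz).2
    refine norm_lt_one_of_root hs hx1 hx
      (aeval_psi_eq_zero_iff.1 (by rw [hpq, map_mul, hqz, mul_zero])) ?_
    rintro rfl
    apply hqx
    rw [← Complex.coe_algebraMap, aeval_algebraMap_apply] at hqz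
    exact (algebraMap ℝ ℂ).injective (hqz.trans (map_zero _).symm)
  rw [hpq, eq_one_of_monic_natDegree_zero hq
    (natDegree_eq_zero_of_forall_norm_aroots_lt_one hq hq0 hroots), mul_one]

lemma finrank_adjoin_ofReal : Module.finrank ℚ ℚ⟮(x : ℂ)⟯ = s := by
  have hint : IsIntegral ℤ (x : ℂ) :=
    isIntegral_of_aeval_psi_eq_zero (aeval_psi_eq_zero_iff.2 (by exact_mod_cast hx))
  rw [adjoin.finrank hint.tower_top, minpoly.isIntegrallyClosed_eq_field_fractions' ℚ hint,
    (minpoly.monic hint).natDegree_map, ← Complex.coe_algebraMap,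
    minpoly.algebraMap_eq (algebraMap ℝ ℂ).injective, minpoly_eq_psi hs hx1 hx, natDegree_psi]

lemma mem_adjoin_of_zpow_mul_lucasCoeff_eq {r : ℕ} {e : ℂ} {a b : ℤ} (ha : 0 ≤ a)
    (h : (x : ℂ) ^ a * lucasCoeff s (x : ℂ) = e ^ b * lucasCoeff r e)
    (hbig : 6 < ‖e ^ b * lucasCoeff r e‖) : (x : ℂ) ∈ ℚ⟮e⟯ := by
  by_contra hxE
  set E := ℚ⟮e⟯
  have hxC : aeval (x : ℂ) (psi s) = 0 := aeval_psi_eq_zero_iff.2 (by exact_mod_cast hx)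
  obtain ⟨σ, hσ⟩ := exists_algHom_adjoin_gen_ne
    ((isIntegral_of_aeval_psi_eq_zero hxC).tower_top (A := E)) fun ⟨y, hy⟩ => hxE (hy ▸ y.2)
  set u := AdjoinSimple.gen E (x : ℂ)
  set v : E⟮(x : ℂ)⟯ := algebraMap E _ ⟨e, mem_adjoin_simple_self ℚ e⟩
  have hrel : u ^ a * lucasCoeff s u = v ^ b * lucasCoeff r v :=
    (algebraMap E⟮(x : ℂ)⟯ ℂ).injective (by
      rw [map_mul, map_mul, map_zpow₀, map_zpow₀, map_lucasCoeff, map_lucasCoeff,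
        AdjoinSimple.algebraMap_gen, ← IsScalarTower.algebraMap_apply]
      exact h)
  have hσrel := congrArg σ hrel
  simp only [map_mul, map_zpow₀, map_lucasCoeff, v, σ.commutes] at hσrel
  have hroot : aeval (σ u) (psi s) = 0 := by
    have hu : aeval u (psi s) = 0 := (algebraMap E⟮(x : ℂ)⟯ ℂ).injective (by
      rw [← aeval_algebraMap_apply, AdjoinSimple.algebraMap_gen, hxC, map_zero])
    rw [show σ u = σ.toRingHom.toIntAlgHom u from rfl, aeval_algHom_apply, hu, map_zero]
  have hsmall := norm_zpow_mul_lucasCoeff_le_six hs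
    (norm_lt_one_of_root hs hx1 hx (aeval_psi_eq_zero_iff.1 hroot) hσ).le ha
  rw [hσrel] at hsmall
  exact absurd hbig (not_lt.2 (by simpa using hsmall))

end DominantRoot

theorem linear_form_nonzero_general (k l : ℕ) (hl : 2 ≤ l) (hkl : l < k)
    (α β : ℝ) (hα1 : 1 < α)
    (hαroot : α ^ k = ∑ i ∈ Finset.range k, α ^ i)
    (hβ1 : 1 < β)
    (hβroot : β ^ l = ∑ i ∈ Finset.range l, β ^ i)
    (n m : ℤ) (hm : 7 ≤ m) :
    α ^ (n - 1) * β ^ (-(m - 1)) *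
        ((2 * α - 1) * ((α - 1) / (2 + (k + 1) * (α - 2)))) *
        ((2 * β - 1) * ((β - 1) / (2 + (l + 1) * (β - 2))))⁻¹ - 1 ≠ 0 := by
  change α ^ (n - 1) * β ^ (-(m - 1)) * lucasCoeff k α * (lucasCoeff l β)⁻¹ - 1 ≠ 0
  intro h
  have hk : 2 ≤ k := by omega
  have hbig := six_lt_zpow_mul_lucasCoeff hl hβ1 hβroot (by omega : 6 ≤ m - 1)
  have key : α ^ (n - 1) * lucasCoeff k α = β ^ (m - 1) * lucasCoeff l β := by
    refine (div_eq_one_iff_eq (by positivity)).1 ?_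
    rw [← sub_eq_zero, ← h, zpow_neg]
    ring
  rcases le_or_gt n 1 with hn | hn
  · linarith [zpow_mul_lucasCoeff_lt_three hk hα1 hαroot (by omega : n - 1 ≤ 0)]
  have keyC : (α : ℂ) ^ (n - 1) * lucasCoeff k (α : ℂ) =
      (β : ℂ) ^ (m - 1) * lucasCoeff l (β : ℂ) := by
    exact_mod_cast key
  have hnorm : ‖(β : ℂ) ^ (m - 1) * lucasCoeff l (β : ℂ)‖ = β ^ (m - 1) * lucasCoeff l β := by
    rw [← Complex.ofReal_zpow, ← Complex.ofReal_lucasCoeff, ← Complex.ofReal_mul,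
      Complex.norm_of_nonneg (by linarith)]
  have hαβ := mem_adjoin_of_zpow_mul_lucasCoeff_eq hk hα1 hαroot (by omega) keyC (hnorm ▸ hbig)
  have hβα := mem_adjoin_of_zpow_mul_lucasCoeff_eq hl hβ1 hβroot (by omega) keyC.symm
    (keyC ▸ hnorm ▸ hbig)
  have hfield : ℚ⟮(α : ℂ)⟯ = ℚ⟮(β : ℂ)⟯ :=
    le_antisymm (adjoin_simple_le_iff.2 hαβ) (adjoin_simple_le_iff.2 hβα)
  have hdeg := finrank_adjoin_ofReal hk hα1 hαroot
  rw [hfield, finrank_adjoin_ofReal hl hβ1 hβroot] at hdeg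
  omega

/-- Nonvanishing of the linear form: for k > ℓ ≥ 2 with dominant roots α of Ψ_k
    and β of Ψ_ℓ, and integers n, m with m ≥ 7, the quantity
    Λ = α^(n−1)·β^(−(m−1))·(2α−1)f_k(α)·((2β−1)f_ℓ(β))⁻¹ − 1 is nonzero. -/
theorem linear_form_nonzero (k l : ℕ) (hl : 2 ≤ l) (hkl : l < k)
    (α β : ℝ) (hα1 : 1 < α) (hα2 : α < 2)
    (hαroot : α ^ k = ∑ i ∈ Finset.range k, α ^ i)
    (hβ1 : 1 < β) (hβ2 : β < 2)
    (hβroot : β ^ l = ∑ i ∈ Finset.range l, β ^ i)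
    (n m : ℤ) (hm : 7 ≤ m) :
    α ^ (n - 1) * β ^ (-(m - 1)) *
        ((2 * α - 1) * ((α - 1) / (2 + (k + 1) * (α - 2)))) *
        ((2 * β - 1) * ((β - 1) / (2 + (l + 1) * (β - 2))))⁻¹ - 1 ≠ 0 :=
  linear_form_nonzero_general k l hl hkl α β hα1 hαroot hβ1 hβroot n m hm
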